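/- Let σ be the invariant measure of a two-map disconnected affine IFS on [0,1] with 0 and 1 as fixed points and both contraction ratios in (0, 1/3], and let μ be the invariant measure of the homogeneous (δ,σ)-IFS for some 0 < δ < 1. Assume (Cabrelli–Hare–Molter) that a sum of n+1 copies (suitably rescaled, each a two-map Cantor set with minimal ratio a ≤ 1/3) contains an interval whenever (n)a²/(1-a)³ + a/(1-a) ≥ 1. Then supp(μ) contains a nondegenerate closed interval; moreover one can take the interval [0, (1-δ)δⁿ] for some n depending only on a (not on δ). -/

import Mathlib

/-!
The support `K` of `μ` is closed, contains `0`, and satisfies `δ K + (1 - δ) S ⊆ K`, because `μ`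
is the image of `σ ⊗ μ` under `(β, s) ↦ δ s + (1 - δ) β`. Hence `K` contains every partial sumset
`P m = ∑_{j < m} (1 - δ) δ ^ j S`, and by the Cabrelli–Hare–Molter criterion some `P N` contains
an interval `[x, y]`. Each `P m` is invariant under `s ↦ a₁ s` because `S` is, and
`P m + δ ^ m P N ⊆ P (m + N)`. An interval `[X, (1 + s) X] ⊆ P m`, shrunk by a power of `a₁`,
bridges the gaps between the copies `δ ^ m a₁ ^ k [x, y]`, `k ∈ ℕ`; adding them yields
`[X', (1 + (1 + a₁) s) X'] ⊆ P (m + N)`. Once the ratio of the endpoints exceeds `1 / a₁`, the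
copies `a₁ ^ k [X, Y]` cover `(0, Y]`, so `K ⊇ [0, c]` for some `c > 0`.
-/

open MeasureTheory Metric Set

/-- The topological support of a Borel measure on ℝ. -/
def msupport (ν : MeasureTheory.Measure ℝ) : Set ℝ :=
  {x | ∀ ε > 0, 0 < ν (Metric.ball x ε)}

open Filter Topology
open scoped Pointwise

theorem msupport_eq_support (ν : Measure ℝ) : msupport ν = ν.support := by
  ext x
  exact nhds_basis_ball.mem_measureSupport.symm

namespace MeasureTheory.Measure

variable {X Y : Type*} [TopologicalSpace X] [MeasurableSpace X]
  [TopologicalSpace Y] [MeasurableSpace Y]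

theorem image_support_subset_support_map {ν : Measure X} {F : X → Y} (hF : Continuous F)
    (hFm : Measurable F) : F '' ν.support ⊆ (ν.map F).support := by
  rintro _ ⟨x, hx, rfl⟩
  rw [mem_support_iff_forall] at hx ⊢
  intro U hU
  exact (hx _ (hF.continuousAt.preimage_mem_nhds hU)).trans_le (le_map_apply hFm.aemeasurable U)

theorem mk_mem_support_prod {ν : Measure X} {ρ : Measure Y} [SFinite ρ] {x : X} {y : Y}
    (hx : x ∈ ν.support) (hy : y ∈ ρ.support) : (x, y) ∈ (ν.prod ρ).support := by
  rw [mem_support_iff_forall] at hx hy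
  rw [((𝓝 x).basis_sets.prod_nhds (𝓝 y).basis_sets).mem_measureSupport]
  rintro ⟨U, V⟩ ⟨hU, hV⟩
  rw [prod_prod]
  exact ENNReal.mul_pos (hx U hU).ne' (hy V hV).ne'

end MeasureTheory.Measure

section HomogeneousIFS

variable {σ μ : Measure ℝ} [IsFiniteMeasure σ] [IsFiniteMeasure μ] {δ : ℝ}

theorem map_eq_of_forall_integral_eq (hinv : ∀ f : BoundedContinuousFunction ℝ ℝ,
      ∫ x, f x ∂μ = ∫ β, ∫ s, f (δ * s + (1 - δ) * β) ∂μ ∂σ) :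
    (σ.prod μ).map (fun p => δ * p.2 + (1 - δ) * p.1) = μ := by
  have hF : Continuous fun p : ℝ × ℝ => δ * p.2 + (1 - δ) * p.1 := by fun_prop
  refine ext_of_forall_integral_eq_of_IsFiniteMeasure fun f => ?_
  rw [hinv, integral_map hF.aemeasurable f.continuous.aestronglyMeasurable]
  exact integral_prod _ ((f.integrable _).comp_measurable hF.measurable)

theorem add_mem_msupport (hinv : ∀ f : BoundedContinuousFunction ℝ ℝ,
      ∫ x, f x ∂μ = ∫ β, ∫ s, f (δ * s + (1 - δ) * β) ∂μ ∂σ)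
    {b w : ℝ} (hb : b ∈ msupport σ) (hw : w ∈ msupport μ) :
    δ * w + (1 - δ) * b ∈ msupport μ := by
  rw [msupport_eq_support] at *
  rw [← map_eq_of_forall_integral_eq hinv]
  exact Measure.image_support_subset_support_map (by fun_prop) (by fun_prop)
    ⟨(b, w), Measure.mk_mem_support_prod hb hw, rfl⟩

theorem zero_mem_msupport [NeZero μ] (hinv : ∀ f : BoundedContinuousFunction ℝ ℝ,
      ∫ x, f x ∂μ = ∫ β, ∫ s, f (δ * s + (1 - δ) * β) ∂μ ∂σ)
    (h0 : (0 : ℝ) ∈ msupport σ) (hδ0 : 0 ≤ δ) (hδ1 : δ < 1) : (0 : ℝ) ∈ msupport μ := by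
  obtain ⟨w, hw⟩ := Measure.nonempty_support (NeZero.ne μ)
  rw [← msupport_eq_support] at hw
  have hpow : ∀ k : ℕ, δ ^ k * w ∈ msupport μ := by
    intro k
    induction k with
    | zero => simpa using hw
    | succ k ih => simpa [pow_succ', mul_assoc] using add_mem_msupport hinv h0 ih
  have hlim : Tendsto (fun k : ℕ => δ ^ k * w) atTop (𝓝 0) := by
    simpa using (tendsto_pow_atTop_nhds_zero_of_lt_one hδ0 hδ1).mul_const w
  rw [msupport_eq_support] at hpow ⊢
  exact Measure.isClosed_support.mem_of_tendsto hlim (Eventually.of_forall hpow)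

end HomogeneousIFS

theorem Set.pow_smul_set_subset {M α : Type*} [Monoid M] [MulAction M α] {c : M} {A : Set α}
    (h : c • A ⊆ A) (k : ℕ) : c ^ k • A ⊆ A := by
  induction k with
  | zero => rw [pow_zero, one_smul]
  | succ k ih =>
    rw [pow_succ, mul_smul]
    exact (smul_set_mono h).trans ih

theorem exists_mem_Icc_add_mul {X Y x y p z : ℝ} (hp : 0 < p) (hXY : X ≤ Y) (hxy : x ≤ y)
    (hz : z ∈ Icc (X + p * x) (Y + p * y)) : ∃ u ∈ Icc X Y, ∃ v ∈ Icc x y, z = u + p * v := by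
  refine ⟨min (z - p * x) Y, ⟨le_min (by linarith [hz.1]) hXY, min_le_right _ _⟩,
    (z - min (z - p * x) Y) / p, ⟨?_, ?_⟩, by field_simp; ring⟩
  · rw [le_div_iff₀ hp]
    linarith [min_le_left (z - p * x) Y]
  · rw [div_le_iff₀ hp]
    rcases min_cases (z - p * x) Y with ⟨h, -⟩ | ⟨h, -⟩ <;> rw [h] <;> nlinarith [hz.2]

theorem Ioc_zero_subset_of_smul_subset {A : Set ℝ} {a X Y : ℝ} (ha0 : 0 < a) (ha1 : a < 1)
    (hA : a • A ⊆ A) (hXY : X ≤ a * Y) (hIcc : Icc X Y ⊆ A) : Ioc 0 Y ⊆ A := by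
  intro z ⟨hz0, hzY⟩
  have hY : 0 < Y := hz0.trans_le hzY
  obtain ⟨k, hk, hk'⟩ := exists_nat_pow_near_of_lt_one (div_pos hz0 hY)
    ((div_le_one hY).2 hzY) ha0 ha1
  rw [lt_div_iff₀ hY] at hk
  rw [div_le_iff₀ hY] at hk'
  refine Set.pow_smul_set_subset hA k (smul_set_mono hIcc ?_)
  rw [LinearOrderedField.smul_Icc (pow_pos ha0 k)]
  constructor
  · calc a ^ k * X ≤ a ^ k * (a * Y) := by gcongr
      _ = a ^ (k + 1) * Y := by ring
      _ ≤ z := hk.le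
  · linarith

theorem Icc_add_subset_of_forall_add_pow_mul_mem {A : Set ℝ} {a D X Y x y E : ℝ} (ha0 : 0 < a)
    (ha1 : a < 1) (hD : 0 < D) (hXY : X ≤ Y) (hxy : x ≤ y) (hy : 0 < y) (hIcc : Icc X Y ⊆ A)
    (hsum : ∀ k : ℕ, ∀ u ∈ Icc X Y, ∀ v ∈ Icc x y, u + D * a ^ k * v ∈ A)
    (hED : E ≤ D * y) (hEa : E ≤ a * (Y - X)) : Icc X (Y + E) ⊆ A := by
  intro z ⟨hXz, hzE⟩
  rcases le_or_gt z Y with hzY | hYz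
  · exact hIcc ⟨hXz, hzY⟩
  have hDy : 0 < D * y := mul_pos hD hy
  obtain ⟨k, hk, hk'⟩ := exists_nat_pow_near_of_lt_one (div_pos (sub_pos.2 hYz) hDy)
    ((div_le_one hDy).2 (by linarith)) ha0 ha1
  rw [lt_div_iff₀ hDy] at hk
  rw [div_le_iff₀ hDy] at hk'
  -- `z - Y ≤ a (Y - X)` and `D a^(k+1) y < z - Y` give `D a^k y < Y - X`
  have hgap : D * a ^ k * y ≤ Y - X := by
    have : a * (D * a ^ k * y) ≤ a * (Y - X) := by
      calc a * (D * a ^ k * y) = a ^ (k + 1) * (D * y) := by ring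
        _ ≤ a * (Y - X) := by linarith
    exact le_of_mul_le_mul_left this ha0
  have hp : 0 < D * a ^ k := mul_pos hD (pow_pos ha0 k)
  obtain ⟨u, hu, v, hv, rfl⟩ := exists_mem_Icc_add_mul (z := z) hp hXY hxy
    ⟨by nlinarith [mul_le_mul_of_nonneg_left hxy hp.le], by nlinarith⟩
  exact hsum k u hu v hv

/-- `partialSumset S δ m = ∑_{j < m} (1 - δ) δ ^ j • S`. -/
def partialSumset (S : Set ℝ) (δ : ℝ) : ℕ → Set ℝ
  | 0 => {0}
  | m + 1 => (1 - δ) • S + δ • partialSumset S δ m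

namespace partialSumset

variable {S : Set ℝ} {δ : ℝ}

theorem zero_mem (h0 : (0 : ℝ) ∈ S) (m : ℕ) : (0 : ℝ) ∈ partialSumset S δ m := by
  induction m with
  | zero => rfl
  | succ m ih => exact ⟨_, smul_mem_smul_set h0, _, smul_mem_smul_set ih, by simp⟩

theorem add_pow_smul (m m' : ℕ) :
    partialSumset S δ m + δ ^ m • partialSumset S δ m' = partialSumset S δ (m + m') := by
  induction m with
  | zero => simp [partialSumset]
  | succ m ih =>
    rw [Nat.add_right_comm, partialSumset, partialSumset, ← ih, smul_add, smul_smul, ← pow_succ',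
      add_assoc]

theorem subset_add (h0 : (0 : ℝ) ∈ S) (m m' : ℕ) :
    partialSumset S δ m ⊆ partialSumset S δ (m + m') := by
  rw [← add_pow_smul]
  exact fun z hz => ⟨z, hz, 0, ⟨0, zero_mem h0 m', smul_zero _⟩, add_zero z⟩

theorem smul_subset {c : ℝ} (hS : c • S ⊆ S) (m : ℕ) :
    c • partialSumset S δ m ⊆ partialSumset S δ m := by
  induction m with
  | zero => simp [partialSumset]
  | succ m ih =>
    rw [partialSumset, smul_add, smul_comm c (1 - δ), smul_comm c δ]
    exact add_subset_add (smul_set_mono hS) (smul_set_mono ih)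

theorem subset_Ici (hS : S ⊆ Ici 0) (hδ0 : 0 ≤ δ) (hδ1 : δ ≤ 1) (m : ℕ) :
    partialSumset S δ m ⊆ Ici 0 := by
  induction m with
  | zero => simp [partialSumset]
  | succ m ih =>
    rintro _ ⟨_, ⟨s, hs, rfl⟩, _, ⟨w, hw, rfl⟩, rfl⟩
    have : (0 : ℝ) ≤ 1 - δ := by linarith
    exact add_nonneg (mul_nonneg this (hS hs)) (mul_nonneg hδ0 (ih hw))

theorem sum_mem {m : ℕ} {s : Fin m → ℝ} (hs : ∀ i, s i ∈ S) :
    ∑ i : Fin m, (1 - δ) * δ ^ (i : ℕ) * s i ∈ partialSumset S δ m := by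
  induction m with
  | zero => simp [partialSumset]
  | succ m ih =>
    refine ⟨_, smul_mem_smul_set (hs 0), _, smul_mem_smul_set (ih fun i => hs i.succ), ?_⟩
    simp only [Fin.sum_univ_succ, smul_eq_mul, Finset.mul_sum, Fin.val_zero, Fin.val_succ,
      pow_succ']
    congr 1
    · ring
    · exact Finset.sum_congr rfl fun i _ => by ring

theorem subset_msupport {σ μ : Measure ℝ} [IsFiniteMeasure σ] [IsFiniteMeasure μ]
    (hinv : ∀ f : BoundedContinuousFunction ℝ ℝ,
      ∫ x, f x ∂μ = ∫ β, ∫ s, f (δ * s + (1 - δ) * β) ∂μ ∂σ)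
    (hS : S ⊆ msupport σ) (h0 : (0 : ℝ) ∈ msupport μ) (m : ℕ) :
    partialSumset S δ m ⊆ msupport μ := by
  induction m with
  | zero => simpa [partialSumset] using h0
  | succ m ih =>
    rintro _ ⟨_, ⟨b, hb, rfl⟩, _, ⟨w, hw, rfl⟩, rfl⟩
    simpa [add_comm] using add_mem_msupport hinv (hS hb) (ih hw)

variable {a : ℝ}

theorem exists_Icc_subset_add (ha0 : 0 < a) (ha1 : a < 1) (hδ : 0 < δ) (h0 : (0 : ℝ) ∈ S)
    (hS : a • S ⊆ S) {N : ℕ} {x y : ℝ} (hxy : x ≤ y) (hy : 0 < y)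
    (hN : Icc x y ⊆ partialSumset S δ N) {m : ℕ} {s X : ℝ} (hs : 0 < s) (hX : 0 < X)
    (hm : Icc X ((1 + s) * X) ⊆ partialSumset S δ m) :
    ∃ X' > 0, Icc X' ((1 + (1 + a) * s) * X') ⊆ partialSumset S δ (m + N) := by
  obtain ⟨K, hK⟩ := exists_pow_lt_of_lt_one (show 0 < δ ^ m * y / (a * s * X) by positivity) ha1
  rw [lt_div_iff₀ (by positivity)] at hK
  have hX' : 0 < a ^ K * X := by positivity
  have hmK : Icc (a ^ K * X) ((1 + s) * (a ^ K * X)) ⊆ partialSumset S δ m := by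
    intro z hz
    refine Set.pow_smul_set_subset (smul_subset hS m) K (smul_set_mono hm ?_)
    rwa [LinearOrderedField.smul_Icc (by positivity), mul_left_comm (a ^ K)]
  refine ⟨a ^ K * X, hX', ?_⟩
  rw [show (1 + (1 + a) * s) * (a ^ K * X) = (1 + s) * (a ^ K * X) + a * s * (a ^ K * X) by ring]
  refine Icc_add_subset_of_forall_add_pow_mul_mem ha0 ha1 (pow_pos hδ m) (by nlinarith) hxy hy
    (hmK.trans (subset_add h0 m N)) (fun k u hu v hv => ?_) (by linarith) (by linarith)
  rw [← add_pow_smul]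
  refine ⟨u, hmK hu, δ ^ m * (a ^ k * v), ⟨a ^ k * v, ?_, rfl⟩, by ring⟩
  exact Set.pow_smul_set_subset (smul_subset hS N) k (smul_mem_smul_set (hN hv))

theorem exists_Ioc_subset (ha0 : 0 < a) (ha1 : a < 1) (hδ : 0 < δ) (h0 : (0 : ℝ) ∈ S)
    (hS : a • S ⊆ S) {N : ℕ} {x y : ℝ} (hxy : x < y) (hy : 0 < y)
    (hN : Icc x y ⊆ partialSumset S δ N) : ∃ c > 0, ∃ m, Ioc 0 c ⊆ partialSumset S δ m := by
  set X₀ := max x (y / 2)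
  have hX₀ : 0 < X₀ := lt_max_of_lt_right (by positivity)
  have hs₀ : 0 < y / X₀ - 1 := by
    rw [sub_pos, one_lt_div hX₀]
    exact max_lt hxy (by linarith)
  have hgrow : ∀ t : ℕ, ∃ m, ∃ X > 0,
      Icc X ((1 + (1 + a) ^ t * (y / X₀ - 1)) * X) ⊆ partialSumset S δ m := by
    intro t
    induction t with
    | zero =>
      refine ⟨N, X₀, hX₀, (Icc_subset_Icc (le_max_left _ _) (le_of_eq ?_)).trans hN⟩
      field_simp
      ring
    | succ t ih =>
      obtain ⟨m, X, hX, hm⟩ := ih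
      obtain ⟨X', hX', hm'⟩ := exists_Icc_subset_add ha0 ha1 hδ h0 hS hxy.le hy hN
        (by positivity) hX hm
      exact ⟨m + N, X', hX', by rwa [pow_succ', mul_assoc]⟩
  obtain ⟨t, ht⟩ := pow_unbounded_of_one_lt (1 / (a * (y / X₀ - 1))) (by linarith : 1 < 1 + a)
  rw [div_lt_iff₀ (by positivity)] at ht
  obtain ⟨m, X, hX, hm⟩ := hgrow t
  refine ⟨_, by positivity, m, Ioc_zero_subset_of_smul_subset ha0 ha1 (smul_subset hS m) ?_ hm⟩
  nlinarith

end partialSumset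

theorem exists_nat_one_le_criterion {a : ℝ} (ha0 : 0 < a) (ha1 : a < 1) :
    ∃ n : ℕ, 1 ≤ (n : ℝ) * a ^ 2 / (1 - a) ^ 3 + a / (1 - a) := by
  obtain ⟨n, hn⟩ := exists_nat_ge ((1 - a) ^ 3 / a ^ 2)
  have h1a : 0 < 1 - a := by linarith
  refine ⟨n, ?_⟩
  have : 1 ≤ (n : ℝ) * a ^ 2 / (1 - a) ^ 3 := by
    rw [le_div_iff₀ (by positivity), one_mul]
    rwa [div_le_iff₀ (by positivity)] at hn
  have : 0 ≤ a / (1 - a) := by positivity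
  linarith

theorem supp_mu_contains_interval_general
    (a₁ a₂ : ℝ) (h₁ : 0 < a₁ ∧ a₁ ≤ 1/3) (h₂ : 0 < a₂ ∧ a₂ ≤ 1/3)
    (a : ℝ) (ha : a = min a₁ a₂)
    (σ μ : Measure ℝ) [IsProbabilityMeasure σ] [IsProbabilityMeasure μ]
    (S : Set ℝ) (hSdef : S = msupport σ)
    (hS01 : S ⊆ Set.Icc (0:ℝ) 1) (h0S : (0:ℝ) ∈ S)
    -- S is the attractor of the first-generation IFS with fixed points 0 and 1
    (hattr : S = (fun x => a₁ * x) '' S ∪ (fun x => a₂ * x + (1 - a₂)) '' S)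
    (δ : ℝ) (hδ0 : 0 < δ) (hδ1 : δ < 1)
    -- μ is the invariant measure of the homogeneous (δ,σ)-IFS
    (hinv : ∀ f : BoundedContinuousFunction ℝ ℝ,
      ∫ x, f x ∂μ = ∫ β, ∫ s, f (δ * s + (1 - δ) * β) ∂μ ∂σ)
    -- Cabrelli–Hare–Molter criterion, assumed: a sum of n+1 rescaled copies
    -- of S contains an interval whenever n·a²/(1-a)³ + a/(1-a) ≥ 1
    (hCHM : ∀ n : ℕ,
      1 ≤ (n : ℝ) * a ^ 2 / (1 - a) ^ 3 + a / (1 - a) →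
      ∀ c : Fin (n + 1) → ℝ, (∀ i, 0 < c i) →
        ∃ x y : ℝ, x < y ∧ Set.Icc x y ⊆
          {z : ℝ | ∃ s : Fin (n + 1) → ℝ, (∀ i, s i ∈ S) ∧
            z = ∑ i, c i * s i}) :
    (∃ x y : ℝ, x < y ∧ Set.Icc x y ⊆ msupport μ) ∧
    ∃ n : ℕ, Set.Icc (0 : ℝ) ((1 - δ) * δ ^ n) ⊆ msupport μ := by
  have ha₁1 : a₁ < 1 := by linarith [h₁.2]
  have ha0 : 0 < a := ha ▸ lt_min h₁.1 h₂.1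
  have ha1 : a < 1 := ha ▸ (min_le_left a₁ a₂).trans_lt ha₁1
  have hS : a₁ • S ⊆ S := by
    rintro _ ⟨s, hs, rfl⟩
    rw [hattr]
    exact Or.inl ⟨s, hs, rfl⟩
  obtain ⟨n, hn⟩ := exists_nat_one_le_criterion ha0 ha1
  obtain ⟨x, y, hxy, hI⟩ := hCHM n hn (fun i => (1 - δ) * δ ^ (i : ℕ))
    (fun i => mul_pos (sub_pos.2 hδ1) (pow_pos hδ0 _))
  have hIP : Icc x y ⊆ partialSumset S δ (n + 1) := by
    intro z hz
    obtain ⟨s, hs, rfl⟩ := hI hz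
    exact partialSumset.sum_mem hs
  have hy : 0 < y := lt_of_le_of_lt (partialSumset.subset_Ici (fun s hs => (hS01 hs).1)
    hδ0.le hδ1.le (n + 1) (hIP (left_mem_Icc.2 hxy.le))) hxy
  obtain ⟨c, hc, m, hcP⟩ := partialSumset.exists_Ioc_subset h₁.1 ha₁1 hδ0 h0S hS hxy hy hIP
  have h0μ : (0 : ℝ) ∈ msupport μ := zero_mem_msupport hinv (hSdef ▸ h0S) hδ0.le hδ1
  have hcμ : Icc 0 c ⊆ msupport μ := by
    rw [← Ioc_insert_left hc.le]
    exact insert_subset h0μ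
      (hcP.trans (partialSumset.subset_msupport hinv hSdef.subset h0μ m))
  obtain ⟨k, hk⟩ := exists_pow_lt_of_lt_one hc hδ1
  have hkμ : Icc 0 ((1 - δ) * δ ^ k) ⊆ msupport μ :=
    (Icc_subset_Icc_right (by nlinarith [pow_pos hδ0 k])).trans hcμ
  exact ⟨⟨0, _, mul_pos (sub_pos.2 hδ1) (pow_pos hδ0 k), hkμ⟩, k, hkμ⟩

theorem supp_mu_contains_interval
    (a₁ a₂ : ℝ) (h₁ : 0 < a₁ ∧ a₁ ≤ 1/3) (h₂ : 0 < a₂ ∧ a₂ ≤ 1/3)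
    (a : ℝ) (ha : a = min a₁ a₂)
    (σ μ : Measure ℝ) [IsProbabilityMeasure σ] [IsProbabilityMeasure μ]
    (S : Set ℝ) (hSdef : S = msupport σ)
    (hS01 : S ⊆ Set.Icc (0:ℝ) 1) (h0S : (0:ℝ) ∈ S) (h1S : (1:ℝ) ∈ S)
    -- S is the attractor of the first-generation IFS with fixed points 0 and 1
    (hattr : S = (fun x => a₁ * x) '' S ∪ (fun x => a₂ * x + (1 - a₂)) '' S)
    -- the first-generation IFS is disconnected
    (hdisc : (fun x => a₁ * x) '' Set.Icc (0:ℝ) 1 ∩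
        (fun x => a₂ * x + (1 - a₂)) '' Set.Icc (0:ℝ) 1 = ∅)
    (δ : ℝ) (hδ0 : 0 < δ) (hδ1 : δ < 1)
    -- μ is the invariant measure of the homogeneous (δ,σ)-IFS
    (hinv : ∀ f : BoundedContinuousFunction ℝ ℝ,
      ∫ x, f x ∂μ = ∫ β, ∫ s, f (δ * s + (1 - δ) * β) ∂μ ∂σ)
    -- Cabrelli–Hare–Molter criterion, assumed: a sum of n+1 rescaled copies
    -- of S contains an interval whenever n·a²/(1-a)³ + a/(1-a) ≥ 1
    (hCHM : ∀ n : ℕ,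
      1 ≤ (n : ℝ) * a ^ 2 / (1 - a) ^ 3 + a / (1 - a) →
      ∀ c : Fin (n + 1) → ℝ, (∀ i, 0 < c i) →
        ∃ x y : ℝ, x < y ∧ Set.Icc x y ⊆
          {z : ℝ | ∃ s : Fin (n + 1) → ℝ, (∀ i, s i ∈ S) ∧
            z = ∑ i, c i * s i}) :
    (∃ x y : ℝ, x < y ∧ Set.Icc x y ⊆ msupport μ) ∧
    ∃ n : ℕ, Set.Icc (0 : ℝ) ((1 - δ) * δ ^ n) ⊆ msupport μ :=
  supp_mu_contains_interval_general a₁ a₂ h₁ h₂ a ha σ μ S hSdef hS01 h0S hattr δ hδ0 hδ1 hinv hCHM
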